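/- Assume lim_{x↓0} ψ'(x)/p'(x) = 0, lim_{x↑∞} ψ(x) = ∞, lim_{x↑∞} R_Θ(x)/ψ(x) = 0, lim_{x↓0} φ(x) = ∞, and lim_{x↓0} R_Θ(x)/φ(x) = 0. Let x̲ ∈ (ξ, ∞] be the unique point such that the derivative of R_Θ'/ψ' is strictly negative on (0, x̲) and strictly positive on (x̲, ∞), assume x̲ < ∞, set L₀ := lim_{x↓0} R_Θ'(x)/ψ'(x) and x̄ := inf{ s > 0 : R_Θ'(s)/ψ'(s) > L₀ } (inf ∅ = ∞), and assume x̄ < ∞. Then: (a) the limit G₀ := lim_{x↓0} G_Θ(x) exists in ℝ, where G_Θ(x) = (C p'(x)/ψ'(x)) ∫₀ˣ Θ(s) Ψ(s) ds; (b) setting F(0, β) := G_Θ(β) − G₀ and c★ := −F(0, x̄) ∈ (0, ∞), there exist c° ∈ (c★, ∞] and a strictly increasing function β° : [c★, c°) → [x̄, ∞) such that F(0, β°(c)) = −c for all c ∈ [c★, c°) and lim_{c↑c°} β°(c) = ∞; (c) if moreover lim_{x↑∞} ψ'(x)/p'(x) = ∞, then c° = ∞ if and only if lim_{x↑∞} Θ(x)/r(x)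 = −∞. -/

import Mathlib

open Filter Set MeasureTheory Topology

set_option maxHeartbeats 1000000 in
theorem stmt_17
    (b σ r : ℝ → ℝ) (r₀ r₁ : ℝ)
    (hbc : ContinuousOn b (Ioi 0))
    (hσc : ContinuousOn σ (Ioi 0))
    (hrc : ContinuousOn r (Ioi 0))
    (hσpos : ∀ x ∈ Ioi (0:ℝ), 0 < σ x)
    (hr₀ : 0 < r₀) (hr₀₁ : r₀ ≤ r₁)
    (hrbd : ∀ x ∈ Ioi (0:ℝ), r₀ ≤ r x ∧ r x ≤ r₁)
    (p' : ℝ → ℝ)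
    (hp' : ∀ x ∈ Ioi (0:ℝ), p' x = Real.exp (-(2:ℝ) * ∫ s in (1:ℝ)..x, b s / (σ s) ^ 2))
    (φ ψ φ' ψ' φ'' ψ'' : ℝ → ℝ)
    (hφ1 : ∀ x ∈ Ioi (0:ℝ), HasDerivAt φ (φ' x) x)
    (hφ2 : ∀ x ∈ Ioi (0:ℝ), HasDerivAt φ' (φ'' x) x)
    (hφ2c : ContinuousOn φ'' (Ioi 0))
    (hψ1 : ∀ x ∈ Ioi (0:ℝ), HasDerivAt ψ (ψ' x) x)
    (hψ2 : ∀ x ∈ Ioi (0:ℝ), HasDerivAt ψ' (ψ'' x) x)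
    (hψ2c : ContinuousOn ψ'' (Ioi 0))
    (hφpos : ∀ x ∈ Ioi (0:ℝ), 0 < φ x)
    (hφ'neg : ∀ x ∈ Ioi (0:ℝ), φ' x < 0)
    (hψpos : ∀ x ∈ Ioi (0:ℝ), 0 < ψ x)
    (hψ'pos : ∀ x ∈ Ioi (0:ℝ), 0 < ψ' x)
    (hφODE : ∀ x ∈ Ioi (0:ℝ), (1/2) * σ x ^ 2 * φ'' x + b x * φ' x - r x * φ x = 0)
    (hψODE : ∀ x ∈ Ioi (0:ℝ), (1/2) * σ x ^ 2 * ψ'' x + b x * ψ' x - r x * ψ x = 0)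
    (C : ℝ) (hC : 0 < C)
    (hWr : ∀ x ∈ Ioi (0:ℝ), φ x * ψ' x - φ' x * ψ x = C * p' x)
    (Ψ Φ : ℝ → ℝ)
    (hΨ : ∀ x ∈ Ioi (0:ℝ), Ψ x = 2 * ψ x / (C * σ x ^ 2 * p' x))
    (hΦ : ∀ x ∈ Ioi (0:ℝ), Φ x = 2 * φ x / (C * σ x ^ 2 * p' x))
    (Θ : ℝ → ℝ) (hΘc : ContinuousOn Θ (Ioi 0))
    (hΘIC : ∀ x ∈ Ioi (0:ℝ),
      IntegrableOn (fun s => Θ s * Ψ s) (Ioc 0 x) ∧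
      IntegrableOn (fun s => Θ s * Φ s) (Ioi x))
    (ξ : ℝ) (hξ : 0 < ξ)
    (hΘinc : StrictMonoOn (fun x => Θ x / r x) (Ioo 0 ξ))
    (hΘdec : StrictAntiOn (fun x => Θ x / r x) (Ioi ξ))
    (R R' : ℝ → ℝ)
    (hRdef : ∀ x ∈ Ioi (0:ℝ),
      R x = φ x * (∫ s in Ioc (0:ℝ) x, Θ s * Ψ s) + ψ x * (∫ s in Ioi x, Θ s * Φ s))
    (hR'def : ∀ x ∈ Ioi (0:ℝ),
      R' x = φ' x * (∫ s in Ioc (0:ℝ) x, Θ s * Ψ s) + ψ' x * (∫ s in Ioi x, Θ s * Φ s))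
    (hψ'p'0 : Tendsto (fun x => ψ' x / p' x) (𝓝[>] (0:ℝ)) (𝓝 0))
    (hψT : Tendsto ψ atTop atTop)
    (hRψT : Tendsto (fun x => R x / ψ x) atTop (𝓝 0))
    (hφ0 : Tendsto φ (𝓝[>] (0:ℝ)) atTop)
    (hRφ0 : Tendsto (fun x => R x / φ x) (𝓝[>] (0:ℝ)) (𝓝 0))
    (xl : ℝ) (hxlξ : ξ < xl)
    (hxl1 : ∀ x : ℝ, 0 < x → x < xl → deriv (fun y => R' y / ψ' y) x < 0)
    (hxl2 : ∀ x : ℝ, xl < x → 0 < deriv (fun y => R' y / ψ' y) x)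
    (L0 : EReal)
    (hL0 : Tendsto (fun x => ((R' x / ψ' x : ℝ) : EReal)) (𝓝[>] (0:ℝ)) (𝓝 L0))
    (xbar : ℝ) (hxbar0 : 0 < xbar)
    (hxbar : (xbar : EReal) = sInf ((fun s : ℝ => (s : EReal)) ''
      {s : ℝ | 0 < s ∧ L0 < ((R' s / ψ' s : ℝ) : EReal)}))
    (G : ℝ → ℝ)
    (hGdef : ∀ x ∈ Ioi (0:ℝ), G x = C * p' x / ψ' x * ∫ s in Ioc (0:ℝ) x, Θ s * Ψ s) :
    ∃ G0 : ℝ, Tendsto G (𝓝[>] (0:ℝ)) (𝓝 G0) ∧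
      0 < -(G xbar - G0) ∧
      ∃ c0 : EReal, ((-(G xbar - G0) : ℝ) : EReal) < c0 ∧
      ∃ β0 : ℝ → ℝ,
        StrictMonoOn β0 {c : ℝ | -(G xbar - G0) ≤ c ∧ (c : EReal) < c0} ∧
        (∀ c : ℝ, -(G xbar - G0) ≤ c → (c : EReal) < c0 →
          xbar ≤ β0 c ∧ G (β0 c) - G0 = -c) ∧
        Tendsto β0 (Filter.comap (fun c : ℝ => (c : EReal)) (𝓝[<] c0)) atTop ∧
        (Tendsto (fun x => ψ' x / p' x) atTop atTop →
          (c0 = ⊤ ↔ Tendsto (fun x => Θ x / r x) atTop atBot)) := by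
    classical
  -- ## Basic positivity and continuity facts
  have hp'pos : ∀ x ∈ Ioi (0:ℝ), 0 < p' x := fun x hx => by
    rw [hp' x hx]; exact Real.exp_pos _
  have hrpos : ∀ x ∈ Ioi (0:ℝ), 0 < r x := fun x hx => lt_of_lt_of_le hr₀ (hrbd x hx).1
  have hσne : ∀ x ∈ Ioi (0:ℝ), σ x ^ 2 ≠ 0 := fun x hx => pow_ne_zero _ (ne_of_gt (hσpos x hx))
  have hψ'ne : ∀ x ∈ Ioi (0:ℝ), ψ' x ≠ 0 := fun x hx => ne_of_gt (hψ'pos x hx)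
  have hCp'ne : ∀ x ∈ Ioi (0:ℝ), C * p' x ≠ 0 := fun x hx =>
    ne_of_gt (mul_pos hC (hp'pos x hx))
  have hφc : ContinuousOn φ (Ioi 0) := fun x hx => (hφ1 x hx).continuousAt.continuousWithinAt
  have hφ'c : ContinuousOn φ' (Ioi 0) := fun x hx => (hφ2 x hx).continuousAt.continuousWithinAt
  have hψc : ContinuousOn ψ (Ioi 0) := fun x hx => (hψ1 x hx).continuousAt.continuousWithinAt
  have hψ'c : ContinuousOn ψ' (Ioi 0) := fun x hx => (hψ2 x hx).continuousAt.continuousWithinAt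
  have hbσc : ContinuousOn (fun s => b s / σ s ^ 2) (Ioi 0) :=
    hbc.div (hσc.pow 2) (fun x hx => hσne x hx)
  have hPd : ∀ x ∈ Ioi (0:ℝ),
      HasDerivAt (fun y => ∫ s in (1:ℝ)..y, b s / σ s ^ 2) (b x / σ x ^ 2) x := by
    intro x hx
    have hx0 : (0:ℝ) < x := hx
    have hsub : uIcc (1:ℝ) x ⊆ Ioi 0 := by
      intro s hs
      rcases Set.mem_uIcc.mp hs with h | h
      · exact lt_of_lt_of_le one_pos h.1
      · exact lt_of_lt_of_le hx0 h.1
    exact intervalIntegral.integral_hasDerivAt_right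
      ((hbσc.mono hsub).intervalIntegrable)
      (hbσc.stronglyMeasurableAtFilter isOpen_Ioi x hx)
      (hbσc.continuousAt (isOpen_Ioi.mem_nhds hx))
  have hp'd : ∀ x ∈ Ioi (0:ℝ),
      HasDerivAt p' (p' x * (-(2:ℝ) * (b x / σ x ^ 2))) x := by
    intro x hx
    have heq : p' =ᶠ[𝓝 x] fun y => Real.exp (-(2:ℝ) * ∫ s in (1:ℝ)..y, b s / σ s ^ 2) :=
      Filter.eventuallyEq_of_mem (isOpen_Ioi.mem_nhds hx) (fun y hy => hp' y hy)
    have h1 : HasDerivAt (fun y => -(2:ℝ) * ∫ s in (1:ℝ)..y, b s / σ s ^ 2)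
        (-(2:ℝ) * (b x / σ x ^ 2)) x := (hPd x hx).const_mul _
    have h2 := h1.exp
    rw [← hp' x hx] at h2
    exact h2.congr_of_eventuallyEq heq
  have hp'c : ContinuousOn p' (Ioi 0) := fun x hx => (hp'd x hx).continuousAt.continuousWithinAt
  have hdenne : ∀ x ∈ Ioi (0:ℝ), C * σ x ^ 2 * p' x ≠ 0 := fun x hx =>
    ne_of_gt (mul_pos (mul_pos hC (pow_pos (hσpos x hx) 2)) (hp'pos x hx))
  have hΨc : ContinuousOn Ψ (Ioi 0) :=
    ContinuousOn.congr
      ((continuousOn_const.mul hψc).div ((continuousOn_const.mul (hσc.pow 2)).mul hp'c) hdenne)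
      (fun x hx => hΨ x hx)
  have hΦc : ContinuousOn Φ (Ioi 0) :=
    ContinuousOn.congr
      ((continuousOn_const.mul hφc).div ((continuousOn_const.mul (hσc.pow 2)).mul hp'c) hdenne)
      (fun x hx => hΦ x hx)
  have hΨpos : ∀ x ∈ Ioi (0:ℝ), 0 < Ψ x := by
    intro x hx
    rw [hΨ x hx]
    exact div_pos (by have := hψpos x hx; linarith)
      (mul_pos (mul_pos hC (pow_pos (hσpos x hx) 2)) (hp'pos x hx))
  have hΘΨc : ContinuousOn (fun s => Θ s * Ψ s) (Ioi 0) := hΘc.mul hΨc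
  have hΘΦc : ContinuousOn (fun s => Θ s * Φ s) (Ioi 0) := hΘc.mul hΦc
  -- ## The primitives I and J
  set I : ℝ → ℝ := fun x => ∫ s in Ioc (0:ℝ) x, Θ s * Ψ s with hIdef
  set J : ℝ → ℝ := fun x => ∫ s in Ioi x, Θ s * Φ s with hJdef
  have hRdef' : ∀ x ∈ Ioi (0:ℝ), R x = φ x * I x + ψ x * J x := hRdef
  have hR'def' : ∀ x ∈ Ioi (0:ℝ), R' x = φ' x * I x + ψ' x * J x := hR'def
  have hGdef' : ∀ x ∈ Ioi (0:ℝ), G x = C * p' x / ψ' x * I x := hGdef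
  have hId : ∀ x ∈ Ioi (0:ℝ), HasDerivAt I (Θ x * Ψ x) x := by
    intro x hx
    have hx0 : (0:ℝ) < x := hx
    have ha : (0:ℝ) < x/2 := by linarith
    have hax : x/2 < x := by linarith
    have hint : IntervalIntegrable (fun s => Θ s * Ψ s) volume (x/2) x := by
      constructor
      · exact ((hΘIC x hx).1).mono_set (Ioc_subset_Ioc_left ha.le)
      · rw [Set.Ioc_eq_empty (by linarith)]
        exact integrableOn_empty
    have hF : HasDerivAt (fun y => ∫ s in (x/2)..y, Θ s * Ψ s) (Θ x * Ψ x) x :=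
      intervalIntegral.integral_hasDerivAt_right hint
        (hΘΨc.stronglyMeasurableAtFilter isOpen_Ioi x hx)
        (hΘΨc.continuousAt (isOpen_Ioi.mem_nhds hx))
    have heq : I =ᶠ[𝓝 x] fun y => I (x/2) + ∫ s in (x/2)..y, Θ s * Ψ s := by
      refine Filter.eventuallyEq_of_mem (isOpen_Ioi.mem_nhds (show x ∈ Ioi (x/2) from hax)) ?_
      intro y hy
      have hy2 : x/2 < y := hy
      have hy0 : y ∈ Ioi (0:ℝ) := lt_trans ha hy2
      have hdisj : Disjoint (Ioc (0:ℝ) (x/2)) (Ioc (x/2) y) := by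
        rw [Set.disjoint_left]
        rintro s ⟨_, h1⟩ ⟨h2, _⟩
        exact absurd h2 (not_lt.mpr h1)
      simp only [hIdef]
      rw [← Ioc_union_Ioc_eq_Ioc ha.le hy2.le,
        setIntegral_union hdisj measurableSet_Ioc
          (((hΘIC y hy0).1).mono_set (Ioc_subset_Ioc_right hy2.le))
          (((hΘIC y hy0).1).mono_set (Ioc_subset_Ioc_left ha.le)),
        intervalIntegral.integral_of_le hy2.le]
    exact (hF.const_add (I (x/2))).congr_of_eventuallyEq heq
  have hJd : ∀ x ∈ Ioi (0:ℝ), HasDerivAt J (-(Θ x * Φ x)) x := by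
    intro x hx
    have hx0 : (0:ℝ) < x := hx
    have ha : (0:ℝ) < x/2 := by linarith
    have hax : x/2 < x := by linarith
    have hint : IntervalIntegrable (fun s => Θ s * Φ s) volume (x/2) x := by
      constructor
      · exact ((hΘIC (x/2) ha).2).mono_set Ioc_subset_Ioi_self
      · rw [Set.Ioc_eq_empty (by linarith)]
        exact integrableOn_empty
    have hF : HasDerivAt (fun y => ∫ s in (x/2)..y, Θ s * Φ s) (Θ x * Φ x) x :=
      intervalIntegral.integral_hasDerivAt_right hint
        (hΘΦc.stronglyMeasurableAtFilter isOpen_Ioi x hx)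
        (hΘΦc.continuousAt (isOpen_Ioi.mem_nhds hx))
    have heq : J =ᶠ[𝓝 x] fun y => J (x/2) - ∫ s in (x/2)..y, Θ s * Φ s := by
      refine Filter.eventuallyEq_of_mem (isOpen_Ioi.mem_nhds (show x ∈ Ioi (x/2) from hax)) ?_
      intro y hy
      have hy2 : x/2 < y := hy
      have hdisj : Disjoint (Ioc (x/2) y) (Ioi y) := by
        rw [Set.disjoint_left]
        rintro s ⟨_, h1⟩ h2
        exact absurd (mem_Ioi.mp h2) (not_lt.mpr h1)
      have hsplit : J (x/2) = (∫ s in Ioc (x/2) y, Θ s * Φ s) + J y := by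
        simp only [hJdef]
        rw [← Ioc_union_Ioi_eq_Ioi hy2.le,
          setIntegral_union hdisj measurableSet_Ioi
            (((hΘIC (x/2) ha).2).mono_set Ioc_subset_Ioi_self)
            (((hΘIC (x/2) ha).2).mono_set (Ioi_subset_Ioi hy2.le))]
      show J y = J (x/2) - ∫ s in (x/2)..y, Θ s * Φ s
      rw [intervalIntegral.integral_of_le hy2.le]
      linarith [hsplit]
    exact (hF.const_sub (J (x/2))).congr_of_eventuallyEq heq
  -- ## Derivatives of R, R', H, G
  have hRd : ∀ x ∈ Ioi (0:ℝ), HasDerivAt R (R' x) x := by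
    intro x hx
    have heq : R =ᶠ[𝓝 x] fun y => φ y * I y + ψ y * J y :=
      Filter.eventuallyEq_of_mem (isOpen_Ioi.mem_nhds hx) (fun y hy => hRdef' y hy)
    have h1 : HasDerivAt (fun y => φ y * I y + ψ y * J y)
        (φ' x * I x + φ x * (Θ x * Ψ x) + (ψ' x * J x + ψ x * -(Θ x * Φ x))) x :=
      ((hφ1 x hx).mul (hId x hx)).add ((hψ1 x hx).mul (hJd x hx))
    have h2 : φ' x * I x + φ x * (Θ x * Ψ x) + (ψ' x * J x + ψ x * -(Θ x * Φ x)) = R' x := by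
      rw [hR'def' x hx, hΨ x hx, hΦ x hx]; ring
    exact (h2 ▸ h1).congr_of_eventuallyEq heq
  set R2 : ℝ → ℝ := fun x =>
    φ'' x * I x + φ' x * (Θ x * Ψ x) + (ψ'' x * J x + ψ' x * -(Θ x * Φ x)) with hR2def
  have hR'd : ∀ x ∈ Ioi (0:ℝ), HasDerivAt R' (R2 x) x := by
    intro x hx
    have heq : R' =ᶠ[𝓝 x] fun y => φ' y * I y + ψ' y * J y :=
      Filter.eventuallyEq_of_mem (isOpen_Ioi.mem_nhds hx) (fun y hy => hR'def' y hy)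
    exact (((hφ2 x hx).mul (hId x hx)).add
      ((hψ2 x hx).mul (hJd x hx))).congr_of_eventuallyEq heq
  set H : ℝ → ℝ := fun y => R' y / ψ' y with hHdef
  set H' : ℝ → ℝ := fun x => (R2 x * ψ' x - R' x * ψ'' x) / (ψ' x) ^ 2 with hH'def
  have hHd : ∀ x ∈ Ioi (0:ℝ), HasDerivAt H (H' x) x := fun x hx =>
    (hR'd x hx).div (hψ2 x hx) (hψ'ne x hx)
  have hHderiv : ∀ x ∈ Ioi (0:ℝ), deriv H x = H' x := fun x hx => (hHd x hx).deriv
  have hHc : ContinuousOn H (Ioi 0) := fun x hx => (hHd x hx).continuousAt.continuousWithinAt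
  have hH'neg : ∀ x, 0 < x → x < xl → H' x < 0 := by
    intro x h1 h2
    rw [← hHderiv x h1]
    exact hxl1 x h1 h2
  have hxl0 : (0:ℝ) < xl := lt_trans hξ hxlξ
  have hH'pos : ∀ x, xl < x → 0 < H' x := by
    intro x h1
    rw [← hHderiv x (lt_trans hxl0 h1)]
    exact hxl2 x h1
  -- ODE rearrangements
  have hφ''eq : ∀ x ∈ Ioi (0:ℝ), φ'' x = 2 * (r x * φ x - b x * φ' x) / σ x ^ 2 := by
    intro x hx
    rw [eq_div_iff (hσne x hx)]
    linear_combination 2 * (hφODE x hx)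
  have hψ''eq : ∀ x ∈ Ioi (0:ℝ), ψ'' x = 2 * (r x * ψ x - b x * ψ' x) / σ x ^ 2 := by
    intro x hx
    rw [eq_div_iff (hσne x hx)]
    linear_combination 2 * (hψODE x hx)
  -- Key identity :  H' = (2r/(σ²ψ')) (G - Θ/r)
  have hH'G : ∀ x ∈ Ioi (0:ℝ), H' x = 2 * r x / (σ x ^ 2 * ψ' x) * (G x - Θ x / r x) := by
    intro x hx
    have hσ2 := hσne x hx
    have hψ'x := hψ'ne x hx
    have hr := (hrpos x hx).ne'
    have hcp := hCp'ne x hx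
    have hσx := (hσpos x hx).ne'
    have hpx := (hp'pos x hx).ne'
    have hCne := hC.ne'
    have hA : φ'' x * ψ' x - φ' x * ψ'' x = 2 * r x / σ x ^ 2 * (C * p' x) := by
      rw [hφ''eq x hx, hψ''eq x hx]
      field_simp
      linear_combination (r x) * hWr x hx
    have hB : φ' x * Ψ x - ψ' x * Φ x = -(2 / σ x ^ 2) := by
      rw [hΨ x hx, hΦ x hx]
      have h1 : φ' x * (2 * ψ x / (C * σ x ^ 2 * p' x)) - ψ' x * (2 * φ x / (C * σ x ^ 2 * p' x))
          = 2 * (φ' x * ψ x - ψ' x * φ x) / (C * σ x ^ 2 * p' x) := by ring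
      have h2 : φ' x * ψ x - ψ' x * φ x = -(C * p' x) := by linarith [hWr x hx]
      rw [h1, h2]
      field_simp
    have hIx : I x = G x * ψ' x / (C * p' x) := by
      rw [hGdef' x hx]; field_simp
    have key : R2 x * ψ' x - R' x * ψ'' x
        = 2 * r x / σ x ^ 2 * (C * p' x) * I x + Θ x * ψ' x * (-(2 / σ x ^ 2)) := by
      simp only [hR2def]
      rw [hR'def' x hx]
      linear_combination (I x) * hA + (Θ x * ψ' x) * hB
    simp only [hH'def]
    rw [key, hIx]
    field_simp
    ring
  -- G = R - ψ·H
  have hGRH : ∀ x ∈ Ioi (0:ℝ), G x = R x - ψ x * H x := by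
    intro x hx
    have hψ'x := hψ'ne x hx
    have hσx := (hσpos x hx).ne'
    have hpx := (hp'pos x hx).ne'
    have hCne := hC.ne'
    simp only [hHdef]
    rw [hGdef' x hx, hRdef' x hx, hR'def' x hx]
    field_simp
    linear_combination (-(I x)) * hWr x hx
  have hGd : ∀ x ∈ Ioi (0:ℝ), HasDerivAt G (-(ψ x * H' x)) x := by
    intro x hx
    have heq : G =ᶠ[𝓝 x] fun y => R y - ψ y * H y :=
      Filter.eventuallyEq_of_mem (isOpen_Ioi.mem_nhds hx) (fun y hy => hGRH y hy)
    have h1 : HasDerivAt (fun y => R y - ψ y * H y)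
        (R' x - (ψ' x * H x + ψ x * H' x)) x :=
      (hRd x hx).sub ((hψ1 x hx).mul (hHd x hx))
    have h2 : R' x - (ψ' x * H x + ψ x * H' x) = -(ψ x * H' x) := by
      simp only [hHdef]
      field_simp [hψ'ne x hx]
      ring
    exact (h2 ▸ h1).congr_of_eventuallyEq heq
  have hGc : ContinuousOn G (Ioi 0) := fun x hx => (hGd x hx).continuousAt.continuousWithinAt
  -- ## Monotonicity facts
  have hψmono : StrictMonoOn ψ (Ioi 0) := by
    apply strictMonoOn_of_deriv_pos (convex_Ioi 0) hψc
    intro x hx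
    rw [interior_Ioi] at hx
    rw [(hψ1 x hx).deriv]
    exact hψ'pos x hx
  have hHanti : StrictAntiOn H (Ioc 0 xl) := by
    apply strictAntiOn_of_deriv_neg (convex_Ioc 0 xl) (hHc.mono Ioc_subset_Ioi_self)
    intro x hx
    rw [interior_Ioc] at hx
    rw [hHderiv x hx.1]
    exact hH'neg x hx.1 hx.2
  have hHmono : StrictMonoOn H (Ici xl) := by
    apply strictMonoOn_of_deriv_pos (convex_Ici xl)
      (hHc.mono (fun t ht => lt_of_lt_of_le hxl0 ht))
    intro x hx
    rw [interior_Ici] at hx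
    rw [hHderiv x (lt_trans hxl0 hx)]
    exact hH'pos x hx
  -- ## L0 is a real number
  have hSne : {s : ℝ | 0 < s ∧ L0 < ((R' s / ψ' s : ℝ) : EReal)}.Nonempty := by
    by_contra hemp
    rw [not_nonempty_iff_eq_empty] at hemp
    rw [hemp, image_empty, sInf_empty] at hxbar
    exact EReal.coe_ne_top xbar hxbar
  obtain ⟨s0, hs0pos, hs0⟩ := hSne
  have hLtop : L0 ≠ ⊤ := fun hEq => by rw [hEq] at hs0; exact not_top_lt hs0
  have hLbot : L0 ≠ ⊥ := by
    have hmem : ((H (xl/2) : ℝ) : EReal) ≤ L0 := by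
      apply ge_of_tendsto hL0
      filter_upwards [Ioo_mem_nhdsGT (half_pos hxl0)] with t ht
      exact EReal.coe_le_coe_iff.mpr
        (hHanti ⟨ht.1, le_trans ht.2.le (half_le_self hxl0.le)⟩
          ⟨half_pos hxl0, half_le_self hxl0.le⟩ ht.2).le
    intro hEq
    rw [hEq] at hmem
    exact absurd hmem (not_le.mpr (EReal.bot_lt_coe _))
  set ℓ : ℝ := L0.toReal with hℓdef
  have hL0coe : L0 = (ℓ : EReal) := (EReal.coe_toReal hLtop hLbot).symm
  have hLreal : Tendsto H (𝓝[>] (0:ℝ)) (𝓝 ℓ) := by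
    rw [hL0coe] at hL0
    exact EReal.tendsto_coe.mp hL0
  have hHleℓ : ∀ a ∈ Ioc (0:ℝ) xl, H a ≤ ℓ := by
    intro a ha
    apply ge_of_tendsto hLreal
    filter_upwards [Ioo_mem_nhdsGT ha.1] with t ht
    exact (hHanti ⟨ht.1, le_trans ht.2.le ha.2⟩ ha ht.2).le
  -- ## Properties of xbar
  have hxbar_le : ∀ s, 0 < s → ℓ < H s → xbar ≤ s := by
    intro s h1 h2
    have hmem : ((s:ℝ):EReal) ∈ (fun s : ℝ => (s : EReal)) ''
        {s : ℝ | 0 < s ∧ L0 < ((R' s / ψ' s : ℝ) : EReal)} :=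
      mem_image_of_mem _ ⟨h1, by rw [hL0coe]; exact_mod_cast h2⟩
    have := hxbar ▸ sInf_le hmem
    exact_mod_cast this
  have hSHgt : ∀ s:ℝ, 0 < s → L0 < ((R' s / ψ' s : ℝ) : EReal) → ℓ < H s := by
    intro s h1 h2
    rw [hL0coe] at h2
    exact_mod_cast h2
  have hxl_le_xbar : xl ≤ xbar := by
    have hle : ((xl:ℝ):EReal) ≤ sInf ((fun s : ℝ => (s : EReal)) ''
        {s : ℝ | 0 < s ∧ L0 < ((R' s / ψ' s : ℝ) : EReal)}) := by
      apply le_sInf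
      rintro y ⟨s, hs, rfl⟩
      have hHgt := hSHgt s hs.1 hs.2
      have hlts : xl < s := by
        by_contra hc
        push_neg at hc
        exact absurd (hHleℓ s ⟨hs.1, hc⟩) (not_le.mpr hHgt)
      show ((xl:ℝ):EReal) ≤ ((s:ℝ):EReal)
      exact_mod_cast hlts.le
    rw [← hxbar] at hle
    exact_mod_cast hle
  have hHxbar_ge : ℓ ≤ H xbar := by
    by_contra hlt
    push_neg at hlt
    have hcAt : ContinuousAt H xbar := (hHd xbar hxbar0).continuousAt
    have hev : H ⁻¹' (Iio ℓ) ∈ 𝓝 xbar := hcAt (Iio_mem_nhds hlt)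
    obtain ⟨ε, hε, hball⟩ := Metric.mem_nhds_iff.mp hev
    have hlt2 : sInf ((fun s : ℝ => (s : EReal)) ''
        {s : ℝ | 0 < s ∧ L0 < ((R' s / ψ' s : ℝ) : EReal)}) < ((xbar + ε/2 : ℝ) : EReal) := by
      rw [← hxbar]
      exact_mod_cast (by linarith : xbar < xbar + ε/2)
    obtain ⟨y, ⟨s, hs, rfl⟩, hy⟩ := sInf_lt_iff.mp hlt2
    have hy' : ((s:ℝ):EReal) < ((xbar + ε/2 : ℝ) : EReal) := hy
    have hs1 : s < xbar + ε/2 := by exact_mod_cast hy'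
    have hs2 : xbar ≤ s := hxbar_le s hs.1 (hSHgt s hs.1 hs.2)
    have hsball : s ∈ Metric.ball xbar ε := by
      rw [Metric.mem_ball, Real.dist_eq, abs_lt]
      constructor <;> linarith
    have h3 : H s < ℓ := hball hsball
    exact absurd (hSHgt s hs.1 hs.2) (not_lt.mpr h3.le)
  have hxlxbar : xl < xbar := by
    rcases eq_or_lt_of_le hxl_le_xbar with hEq | h
    · exfalso
      have h1 : H xl < ℓ :=
        lt_of_lt_of_le
          (hHanti ⟨half_pos hxl0, half_le_self hxl0.le⟩ ⟨hxl0, le_rfl⟩ (half_lt_self hxl0))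
          (hHleℓ _ ⟨half_pos hxl0, half_le_self hxl0.le⟩)
      rw [hEq] at h1
      linarith [hHxbar_ge]
    · exact h
  have hHxbar_le : H xbar ≤ ℓ := by
    have hne : (𝓝[Ioo xl xbar] xbar).NeBot := by
      apply mem_closure_iff_nhdsWithin_neBot.mp
      rw [closure_Ioo (ne_of_lt hxlxbar)]
      exact ⟨hxl_le_xbar, le_rfl⟩
    have htd : Tendsto H (𝓝[Ioo xl xbar] xbar) (𝓝 (H xbar)) :=
      ((hHd xbar hxbar0).continuousAt.continuousWithinAt).tendsto
    apply le_of_tendsto htd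
    filter_upwards [self_mem_nhdsWithin] with t ht
    by_contra hgt
    push_neg at hgt
    have htmem : xbar ≤ t := hxbar_le t (lt_trans hxl0 ht.1) hgt
    exact absurd htmem (not_le.mpr ht.2)
  have hHxbar : H xbar = ℓ := le_antisymm hHxbar_le hHxbar_ge
  set u : ℝ := (xl + xbar)/2 with hudef
  have hu1 : xl < u := by rw [hudef]; linarith
  have hu2 : u < xbar := by rw [hudef]; linarith
  have hu0 : (0:ℝ) < u := lt_trans hxl0 hu1
  have hHu : H u < ℓ := by
    rw [← hHxbar]
    exact hHmono (mem_Ici.mpr hu1.le) (mem_Ici.mpr hxl_le_xbar) hu2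
  -- ## Monotonicity of G and auxiliary functions
  have hGmonoOn : MonotoneOn G (Ioo 0 xl) := by
    have hsm : StrictMonoOn G (Ioo 0 xl) := by
      apply strictMonoOn_of_deriv_pos (convex_Ioo 0 xl) (hGc.mono (fun t ht => ht.1))
      intro x hx
      rw [interior_Ioo] at hx
      rw [(hGd x hx.1).deriv]
      have h' := hH'neg x hx.1 hx.2
      have hψx := hψpos x hx.1
      have : ψ x * H' x < 0 := mul_neg_of_pos_of_neg hψx h'
      linarith
    exact hsm.monotoneOn
  have hGanti : StrictAntiOn G (Ici xbar) := by
    apply strictAntiOn_of_deriv_neg (convex_Ici xbar)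
      (hGc.mono (fun t ht => lt_of_lt_of_le hxbar0 ht))
    intro x hx
    rw [interior_Ici] at hx
    have hx0 : (0:ℝ) < x := lt_trans hxbar0 hx
    rw [(hGd x hx0).deriv]
    have h' := hH'pos x (lt_trans hxlxbar hx)
    have : 0 < ψ x * H' x := mul_pos (hψpos x hx0) h'
    linarith
  set v : ℝ → ℝ := fun y => G y + ψ xl * H y with hvdef
  have hvd : ∀ x ∈ Ioi (0:ℝ), HasDerivAt v ((ψ xl - ψ x) * H' x) x := by
    intro x hx
    have h1 := (hGd x hx).add ((hHd x hx).const_mul (ψ xl))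
    exact h1.congr_deriv (by ring)
  have hvc : ContinuousOn v (Ioi 0) := fun x hx => (hvd x hx).continuousAt.continuousWithinAt
  have hvanti1 : StrictAntiOn v (Ioc 0 xl) := by
    apply strictAntiOn_of_deriv_neg (convex_Ioc 0 xl) (hvc.mono Ioc_subset_Ioi_self)
    intro x hx
    rw [interior_Ioc] at hx
    rw [(hvd x hx.1).deriv]
    apply mul_neg_of_pos_of_neg
    · have := hψmono (mem_Ioi.mpr hx.1) (mem_Ioi.mpr hxl0) hx.2
      linarith
    · exact hH'neg x hx.1 hx.2
  have hvanti2 : StrictAntiOn v (Icc xl u) := by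
    apply strictAntiOn_of_deriv_neg (convex_Icc xl u)
      (hvc.mono (fun t ht => lt_of_lt_of_le hxl0 ht.1))
    intro x hx
    rw [interior_Icc] at hx
    have hx0 : (0:ℝ) < x := lt_trans hxl0 hx.1
    rw [(hvd x hx0).deriv]
    apply mul_neg_of_neg_of_pos
    · have := hψmono (mem_Ioi.mpr hxl0) (mem_Ioi.mpr hx0) hx.1
      linarith
    · exact hH'pos x hx.1
  set w : ℝ → ℝ := fun y => G y + ψ u * H y with hwdef
  have hwd : ∀ x ∈ Ioi (0:ℝ), HasDerivAt w ((ψ u - ψ x) * H' x) x := by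
    intro x hx
    have h1 := (hGd x hx).add ((hHd x hx).const_mul (ψ u))
    exact h1.congr_deriv (by ring)
  have hwc : ContinuousOn w (Ioi 0) := fun x hx => (hwd x hx).continuousAt.continuousWithinAt
  have hwanti : StrictAntiOn w (Icc u xbar) := by
    apply strictAntiOn_of_deriv_neg (convex_Icc u xbar)
      (hwc.mono (fun t ht => lt_of_lt_of_le hu0 ht.1))
    intro x hx
    rw [interior_Icc] at hx
    have hx0 : (0:ℝ) < x := lt_trans hu0 hx.1
    rw [(hwd x hx0).deriv]
    apply mul_neg_of_neg_of_pos
    · have := hψmono (mem_Ioi.mpr hu0) (mem_Ioi.mpr hx0) hx.1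
      linarith
    · exact hH'pos x (lt_trans hu1 hx.1)
  have key1 : ∀ a ∈ Ioo (0:ℝ) xl, G xbar < G a + ψ xl * (H a - H u) + ψ u * (H u - ℓ) := by
    intro a ha
    have h1 : w xbar < w u := hwanti ⟨le_rfl, hu2.le⟩ ⟨hu2.le, le_rfl⟩ hu2
    have h2 : v xl < v a := hvanti1 ⟨ha.1, ha.2.le⟩ ⟨hxl0, le_rfl⟩ ha.2
    have h3 : v u < v xl := hvanti2 ⟨le_rfl, hu1.le⟩ ⟨hu1.le, le_rfl⟩ hu1
    simp only [hvdef, hwdef] at h1 h2 h3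
    rw [hHxbar] at h1
    linarith
  -- ## The limit G0
  have hbdd : BddBelow (G '' Ioo 0 xl) := by
    refine ⟨G xbar - ψ xl * (ℓ - H u) - ψ u * (H u - ℓ), ?_⟩
    rintro y ⟨a, ha, rfl⟩
    have hk := key1 a ha
    have hHa : H a ≤ ℓ := hHleℓ a ⟨ha.1, ha.2.le⟩
    have hψxl : (0:ℝ) < ψ xl := hψpos xl hxl0
    nlinarith [mul_le_mul_of_nonneg_left (sub_le_sub_right hHa (H u)) hψxl.le]
  have hG0 : Tendsto G (𝓝[>] (0:ℝ)) (𝓝 (sInf (G '' Ioo 0 xl))) :=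
    MonotoneOn.tendsto_nhdsWithin_Ioo_right ⟨xl/2, half_pos hxl0, half_lt_self hxl0⟩
      hGmonoOn hbdd
  set G0 : ℝ := sInf (G '' Ioo 0 xl) with hG0def
  have hGxbarlt : G xbar < G0 := by
    have hT : Tendsto (fun a => G a + ψ xl * (H a - H u) + ψ u * (H u - ℓ)) (𝓝[>] (0:ℝ))
        (𝓝 (G0 + ψ xl * (ℓ - H u) + ψ u * (H u - ℓ))) := by
      apply Tendsto.add
      · exact hG0.add (((hLreal.sub_const (H u)).const_mul (ψ xl)))
      · exact tendsto_const_nhds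
    have hle : G xbar ≤ G0 + ψ xl * (ℓ - H u) + ψ u * (H u - ℓ) := by
      apply ge_of_tendsto hT
      filter_upwards [Ioo_mem_nhdsGT hxl0] with a ha
      exact (key1 a ha).le
    have hfac : 0 < (ψ u - ψ xl) * (ℓ - H u) :=
      mul_pos (sub_pos.mpr (hψmono (mem_Ioi.mpr hxl0) (mem_Ioi.mpr hu0) hu1))
        (sub_pos.mpr hHu)
    nlinarith [hle, hfac]
  have hcstar : (0:ℝ) < -(G xbar - G0) := by linarith
  -- ## c0 and β0
  set S2 : Set EReal := (fun x : ℝ => ((G0 - G x : ℝ) : EReal)) '' Ici xbar with hS2def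
  set c0 : EReal := sSup S2 with hc0def
  have hmemS2 : ∀ t, xbar ≤ t → ((G0 - G t : ℝ) : EReal) ∈ S2 := fun t ht =>
    mem_image_of_mem _ ht
  have hGlt : ∀ t, xbar < t → G t < G xbar := fun t ht =>
    hGanti (mem_Ici.mpr le_rfl) (mem_Ici.mpr ht.le) ht
  have hc0gt : ((-(G xbar - G0) : ℝ) : EReal) < c0 := by
    have h1 : ((G0 - G (xbar+1) : ℝ) : EReal) ≤ c0 := le_sSup (hmemS2 _ (by linarith))
    refine lt_of_lt_of_le ?_ h1
    have h2 := hGlt (xbar+1) (by linarith)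
    exact_mod_cast (by linarith : -(G xbar - G0) < G0 - G (xbar+1))
  have hEx : ∀ c : ℝ, -(G xbar - G0) ≤ c → (c : EReal) < c0 → ∃ x, xbar ≤ x ∧ G x = G0 - c := by
    intro c h1 h2
    rw [hc0def, lt_sSup_iff] at h2
    obtain ⟨y, hy, hcy⟩ := h2
    obtain ⟨t, ht, rfl⟩ := hy
    have hcy' : (c : EReal) < ((G0 - G t : ℝ) : EReal) := hcy
    have hct : c < G0 - G t := by exact_mod_cast hcy'
    have hmem : G0 - c ∈ Icc (G t) (G xbar) := ⟨by linarith, by linarith⟩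
    have hsub2 : Icc xbar t ⊆ Ioi (0:ℝ) := fun z hz => lt_of_lt_of_le hxbar0 hz.1
    obtain ⟨x, hx, hGx⟩ := intermediate_value_Icc' (mem_Ici.mp ht) (hGc.mono hsub2) hmem
    exact ⟨x, hx.1, hGx⟩
  set β0 : ℝ → ℝ := fun c =>
    if hc : -(G xbar - G0) ≤ c ∧ (c : EReal) < c0 then (hEx c hc.1 hc.2).choose else xbar
    with hβ0def
  have hβ0spec : ∀ c (h1 : -(G xbar - G0) ≤ c) (h2 : (c : EReal) < c0),
      xbar ≤ β0 c ∧ G (β0 c) = G0 - c := by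
    intro c h1 h2
    have h3 : β0 c = (hEx c h1 h2).choose := by
      simp only [hβ0def]
      rw [dif_pos ⟨h1, h2⟩]
    rw [h3]
    exact (hEx c h1 h2).choose_spec
  have hβmono : StrictMonoOn β0 {c : ℝ | -(G xbar - G0) ≤ c ∧ (c : EReal) < c0} := by
    intro c1 hc1 c2 hc2 h12
    obtain ⟨hb1, hg1⟩ := hβ0spec c1 hc1.1 hc1.2
    obtain ⟨hb2, hg2⟩ := hβ0spec c2 hc2.1 hc2.2
    by_contra hle
    push_neg at hle
    have : G (β0 c1) ≤ G (β0 c2) :=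
      hGanti.antitoneOn (mem_Ici.mpr hb2) (mem_Ici.mpr hb1) hle
    rw [hg1, hg2] at this
    linarith
  have hβtend : Tendsto β0 (Filter.comap (fun c : ℝ => (c : EReal)) (𝓝[<] c0)) atTop := by
    rw [tendsto_atTop]
    intro M
    set M' : ℝ := max M xbar with hM'def
    have hM'b : xbar ≤ M' := le_max_right _ _
    have h2 : ((G0 - G M' : ℝ) : EReal) < c0 := by
      have h3 : ((G0 - G (M'+1) : ℝ) : EReal) ≤ c0 := le_sSup (hmemS2 _ (by linarith))
      refine lt_of_lt_of_le ?_ h3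
      have h4 : G (M'+1) < G M' :=
        hGanti (mem_Ici.mpr hM'b) (mem_Ici.mpr (by linarith)) (by linarith)
      exact_mod_cast (by linarith : G0 - G M' < G0 - G (M'+1))
    set a : ℝ := max (-(G xbar - G0)) (G0 - G M') with hadef
    have hac0 : ((a:ℝ) : EReal) < c0 := by
      rcases max_choice (-(G xbar - G0)) (G0 - G M') with hmc | hmc <;> rw [hadef, hmc]
      · exact hc0gt
      · exact h2
    have hmem : Ioo ((a:ℝ):EReal) c0 ∈ 𝓝[<] c0 := Ioo_mem_nhdsLT_of_mem ⟨hac0, le_rfl⟩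
    filter_upwards [Filter.preimage_mem_comap hmem] with c hc
    have hac' : ((a:ℝ) : EReal) < ((c:ℝ) : EReal) := hc.1
    have hac : a < c := by exact_mod_cast hac'
    have hc1 : -(G xbar - G0) ≤ c := le_trans (le_max_left _ _) hac.le
    have hc2 : (c : EReal) < c0 := hc.2
    obtain ⟨hb, hg⟩ := hβ0spec c hc1 hc2
    have hM'c : G0 - G M' ≤ a := le_max_right _ _
    by_contra hlt
    push_neg at hlt
    have hltM' : β0 c < M' := lt_of_lt_of_le hlt (le_max_left M xbar)
    have hGM' : G M' < G (β0 c) := hGanti (mem_Ici.mpr hb) (mem_Ici.mpr hM'b) hltM'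
    rw [hg] at hGM'
    linarith
  -- ## Assemble, and part (c)
  refine ⟨G0, hG0, hcstar, c0, hc0gt, β0, hβmono, ?_, hβtend, ?_⟩
  · intro c h1 h2
    obtain ⟨hb, hg⟩ := hβ0spec c h1 h2
    refine ⟨hb, ?_⟩
    rw [hg]
    ring
  · intro hqinf
    set q : ℝ → ℝ := fun t => ψ' t / (C * p' t) with hqdef
    have hqd : ∀ x ∈ Ioi (0:ℝ), HasDerivAt q (r x * Ψ x) x := by
      intro x hx
      have h1 : HasDerivAt (fun t => C * p' t) (C * (p' x * (-(2:ℝ) * (b x / σ x ^ 2)))) x :=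
        (hp'd x hx).const_mul C
      have h2 := (hψ2 x hx).div h1 (hCp'ne x hx)
      have hσx := (hσpos x hx).ne'
      have hpx := (hp'pos x hx).ne'
      have hCne := hC.ne'
      refine h2.congr_deriv ?_
      rw [hψ''eq x hx, hΨ x hx]
      field_simp
      ring
    have hqc : ContinuousOn q (Ioi 0) := fun x hx => (hqd x hx).continuousAt.continuousWithinAt
    have hqpos : ∀ x ∈ Ioi (0:ℝ), 0 < q x := fun x hx =>
      div_pos (hψ'pos x hx) (mul_pos hC (hp'pos x hx))
    have hGiq : ∀ x ∈ Ioi (0:ℝ), G x * q x = I x := by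
      intro x hx
      have hψ'x := hψ'ne x hx
      have hpx := (hp'pos x hx).ne'
      have hCne := hC.ne'
      rw [hGdef' x hx, hqdef]
      field_simp
    have hGiff : c0 = ⊤ ↔ Tendsto G atTop atBot := by
      constructor
      · intro htop
        rw [hc0def] at htop
        rw [tendsto_atBot]
        intro K
        obtain ⟨y, hy, hKy⟩ := (sSup_eq_top.mp htop) _ (EReal.coe_lt_top (G0 - K))
        obtain ⟨t, ht, rfl⟩ := hy
        have hKy' : ((G0 - K : ℝ) : EReal) < ((G0 - G t : ℝ) : EReal) := hKy
        have hKt : G0 - K < G0 - G t := by exact_mod_cast hKy'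
        rw [eventually_atTop]
        refine ⟨t, fun x hxt => ?_⟩
        rcases eq_or_lt_of_le hxt with rfl | hlt
        · linarith
        · have := hGanti (mem_Ici.mpr ht) (mem_Ici.mpr (le_trans ht hxt)) hlt
          linarith
      · intro hGb
        rw [hc0def, sSup_eq_top]
        intro y hy
        induction y using EReal.rec with
        | bot => exact ⟨_, hmemS2 xbar le_rfl, EReal.bot_lt_coe _⟩
        | coe K =>
          obtain ⟨t, ht⟩ := ((tendsto_atBot.mp hGb (G0 - K - 1)).and
            (eventually_ge_atTop xbar)).exists
          exact ⟨_, hmemS2 t ht.2, by exact_mod_cast (by linarith [ht.1] : K < G0 - G t)⟩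
        | top => exact absurd hy (lt_irrefl ⊤)
    constructor
    · intro htop
      have hGb := hGiff.mp htop
      apply tendsto_atBot_mono' atTop ?_ hGb
      filter_upwards [eventually_gt_atTop xl] with x hxxl
      have hx0 : (0:ℝ) < x := lt_trans hxl0 hxxl
      have h' := hH'pos x hxxl
      rw [hH'G x hx0] at h'
      have hpos : 0 < 2 * r x / (σ x ^ 2 * ψ' x) :=
        div_pos (by linarith [hrpos x hx0])
          (mul_pos (pow_pos (hσpos x hx0) 2) (hψ'pos x hx0))
      by_contra hcon
      push_neg at hcon
      have hnp : 2 * r x / (σ x ^ 2 * ψ' x) * (G x - Θ x / r x) ≤ 0 :=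
        mul_nonpos_of_nonneg_of_nonpos hpos.le (by linarith)
      linarith
    · intro hΘb
      apply hGiff.mpr
      have hqT : Tendsto q atTop atTop := by
        apply Tendsto.congr (f₁ := fun x => (ψ' x / p' x) / C)
        · intro x
          rw [hqdef]
          rw [div_div, mul_comm]
        · exact hqinf.atTop_div_const hC
      rw [tendsto_atBot]
      intro K
      set K' : ℝ := max 1 (1 - K) with hK'def
      have hK'1 : (1:ℝ) ≤ K' := le_max_left _ _
      have hK'K : 1 - K' ≤ K := by
        have := le_max_right 1 (1-K); linarith
      obtain ⟨y₀, hy₀⟩ := eventually_atTop.mp (tendsto_atBot.mp hΘb (-K'))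
      set y : ℝ := max y₀ 1 with hydef
      have hy0 : (0:ℝ) < y := lt_of_lt_of_le one_pos (le_max_right _ _)
      have hyΘ : ∀ s, y ≤ s → Θ s / r s ≤ -K' := fun s hs =>
        hy₀ s (le_trans (le_max_left _ _) hs)
      have hcont2 : ContinuousOn (fun s => r s * Ψ s) (Ioi 0) := hrc.mul hΨc
      have hbound : ∀ x, y < x → I x ≤ I y + K' * q y - K' * q x := by
        intro x hyx
        have hx0 : (0:ℝ) < x := lt_trans hy0 hyx
        have hdisj : Disjoint (Ioc (0:ℝ) y) (Ioc y x) := by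
          rw [Set.disjoint_left]
          rintro s ⟨_, h1⟩ ⟨h2, _⟩
          exact absurd h2 (not_lt.mpr h1)
        have hsplit : I x = I y + ∫ s in Ioc y x, Θ s * Ψ s := by
          simp only [hIdef]
          rw [← Ioc_union_Ioc_eq_Ioc hy0.le hyx.le,
            setIntegral_union hdisj measurableSet_Ioc
              (((hΘIC x hx0).1).mono_set (Ioc_subset_Ioc_right hyx.le))
              (((hΘIC x hx0).1).mono_set (Ioc_subset_Ioc_left hy0.le))]
        have hsubIcc : Icc y x ⊆ Ioi (0:ℝ) := fun s hs => lt_of_lt_of_le hy0 hs.1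
        have hint2 : IntegrableOn (fun s => r s * Ψ s) (Ioc y x) :=
          ((hcont2.mono hsubIcc).integrableOn_Icc).mono_set Ioc_subset_Icc_self
        have hint2' : IntegrableOn (fun s => -K' * (r s * Ψ s)) (Ioc y x) := by
          exact (hint2.const_mul (-K'))
        have hmono2 : (∫ s in Ioc y x, Θ s * Ψ s) ≤ ∫ s in Ioc y x, -K' * (r s * Ψ s) := by
          apply setIntegral_mono_on (((hΘIC x hx0).1).mono_set (Ioc_subset_Ioc_left hy0.le))
            hint2' measurableSet_Ioc
          intro s hs
          have hs0 : (0:ℝ) < s := lt_trans hy0 hs.1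
          have hrs := hrpos s hs0
          have hΨs := hΨpos s hs0
          have hΘr := hyΘ s hs.1.le
          have hΘs : Θ s ≤ -K' * r s := by
            rw [div_le_iff₀ hrs] at hΘr
            linarith
          calc Θ s * Ψ s ≤ (-K' * r s) * Ψ s :=
                mul_le_mul_of_nonneg_right hΘs hΨs.le
            _ = -K' * (r s * Ψ s) := by ring
        have hFTC : (∫ s in Ioc y x, r s * Ψ s) = q x - q y := by
          rw [← intervalIntegral.integral_of_le hyx.le]
          apply intervalIntegral.integral_eq_sub_of_hasDerivAt
          · intro t ht
            rw [uIcc_of_le hyx.le] at ht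
            exact hqd t (lt_of_lt_of_le hy0 ht.1)
          · apply ContinuousOn.intervalIntegrable
            apply hcont2.mono
            rw [uIcc_of_le hyx.le]
            exact hsubIcc
        have hconst : (∫ s in Ioc y x, -K' * (r s * Ψ s)) = -K' * (q x - q y) := by
          rw [MeasureTheory.integral_const_mul, hFTC]
        rw [hsplit]
        rw [hconst] at hmono2
        linarith
      have hev1 : ∀ᶠ x in atTop, max 1 |I y + K' * q y| ≤ q x :=
        hqT.eventually_ge_atTop _
      filter_upwards [hev1, eventually_gt_atTop y] with x hx1 hx2
      have hx0 : (0:ℝ) < x := lt_trans hy0 hx2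
      have hqx1 : (1:ℝ) ≤ q x := le_trans (le_max_left _ _) hx1
      have hqxN : |I y + K' * q y| ≤ q x := le_trans (le_max_right _ _) hx1
      have hqxpos : (0:ℝ) < q x := lt_of_lt_of_le one_pos hqx1
      have hIb := hbound x hx2
      have hGx : G x * q x = I x := hGiq x hx0
      have h2 : I y + K' * q y ≤ q x := le_trans (le_abs_self _) hqxN
      have h3 : G x * q x ≤ (1 - K') * q x := by
        rw [hGx]
        nlinarith
      have h4 : G x ≤ 1 - K' := le_of_mul_le_mul_right (by linarith) hqxpos
      linarith
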